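/- In the ARS with objects {a,b} and steps a→a and a→b, the set ζ of all derivations that eventually fire the step a→b is not the extension of any intensional strategy with memory. -/

import Mathlib

/-- A derivation over objects `O` and labels `L`: a partial function on ℕ whose
domain is an initial segment, with composable consecutive steps. -/
structure Deriv (O L : Type) where
  step : ℕ → Option (O × L × O)
  initial : ∀ i, step (i + 1) ≠ none → step i ≠ none
  comp : ∀ i s t, step i = some s → step (i + 1) = some t → t.1 = s.2.2

namespace Deriv
/-- Non-empty derivation. -/
def NE {O L : Type} (π : Deriv O L) : Prop := π.step 0 ≠ none
/-- Finite derivation. -/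
def Finite {O L : Type} (π : Deriv O L) : Prop := ∃ n, π.step n = none
/-- Derivation over the set of steps `Γ` of an ARS. -/
def Over {O L : Type} (Γ : Set (O × L × O)) (π : Deriv O L) : Prop :=
  ∀ i s, π.step i = some s → s ∈ Γ
end Deriv

/-- `π₀` is a prefix of `π`. -/
def DPrefix {O L : Type} (π₀ π : Deriv O L) : Prop :=
  ∀ i s, π₀.step i = some s → π.step i = some s

/-- History (trace) of the first `j` steps of a derivation. -/
def histD {O L : Type} (π : Deriv O L) (j : ℕ) : List (O × L) :=
  (List.range j).filterMap fun i => (π.step i).map fun s => (s.1, s.2.1)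

/-- Extension of an intensional strategy with memory. -/
def ExtOf {O L : Type} (lam : List (O × L) → O → Set (O × L × O)) : Set (Deriv O L) :=
  {π | π.NE ∧ ∀ j s, π.step j = some s → s ∈ lam (histD π j) s.1}

/-- Extension of a memoryless intensional strategy. -/
def MExtOf {O L : Type} (lam : O → Set (O × L × O)) : Set (Deriv O L) :=
  {π | π.NE ∧ ∀ j s, π.step j = some s → s ∈ lam s.1}

/-- Well-formedness of an intensional strategy with memory over the ARS `Γ`:
every chosen step has the current object as source and belongs to `Γ`. -/
def WfStrat {O L : Type} (Γ : Set (O × L × O))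
    (lam : List (O × L) → O → Set (O × L × O)) : Prop :=
  ∀ α a s, s ∈ lam α a → s.1 = a ∧ s ∈ Γ

/-- Well-formedness of a memoryless intensional strategy. -/
def MWfStrat {O L : Type} (Γ : Set (O × L × O)) (lam : O → Set (O × L × O)) : Prop :=
  ∀ a s, s ∈ lam a → s.1 = a ∧ s ∈ Γ

/-- `Γ` is a functional relation. -/
def FunctionalARS {O L : Type} (Γ : Set (O × L × O)) : Prop :=
  ∀ a φ b₁ b₂, (a, φ, b₁) ∈ Γ → (a, φ, b₂) ∈ Γ → b₁ = b₂

/-- `π` is a limit point of `ζ`: every finite non-empty prefix of `π` is a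
prefix of some member of `ζ`. -/
def LimPt {O L : Type} (ζ : Set (Deriv O L)) (π : Deriv O L) : Prop :=
  π.NE ∧ ∀ π₀ : Deriv O L, π₀.Finite → π₀.NE → DPrefix π₀ π → ∃ π' ∈ ζ, DPrefix π₀ π'

/-- `ζ` is closed: it contains all its limit points. -/
def ClosedStrat {O L : Type} (ζ : Set (Deriv O L)) : Prop :=
  ∀ π, LimPt ζ π → π ∈ ζ

/-- `ζ` is closed under non-empty prefixes. -/
def PrefClosed {O L : Type} (ζ : Set (Deriv O L)) : Prop :=
  ∀ π ∈ ζ, ∀ π₀ : Deriv O L, π₀.NE → DPrefix π₀ π → π₀ ∈ ζ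

inductive Obj : Type | a | b
inductive Lab : Type | f1 | f2

/-- The ARS with steps a →φ₁ a and a →φ₂ b. -/
def Gam : Set (Obj × Lab × Obj) :=
  {(Obj.a, Lab.f1, Obj.a), (Obj.a, Lab.f2, Obj.b)}

/-- The strategy of all derivations (a →φ₁ a)ⁿ (a →φ₂ b) that eventually fire
the step a → b. -/
def zeta : Set (Deriv Obj Lab) :=
  {π | ∃ n, (∀ i, i < n → π.step i = some (Obj.a, Lab.f1, Obj.a)) ∧
        π.step n = some (Obj.a, Lab.f2, Obj.b) ∧
        ∀ i, n < i → π.step i = none}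

/-! The extension of any strategy with memory is closed: whether a step of a derivation
is allowed depends only on the finitely many steps before it, so a derivation all of whose
finite prefixes extend to members of the extension is itself a member. But the infinite
loop (a →φ₁ a)^ω is a limit point of `zeta` (its prefix of length `n` extends to
(a →φ₁ a)ⁿ (a →φ₂ b)) without belonging to it, so `zeta` is not closed. -/

namespace Deriv

variable {O L : Type}

lemma step_eq_none_of_le (π : Deriv O L) {m n : ℕ} (hm : π.step m = none) (hmn : m ≤ n) :
    π.step n = none := by
  induction n, hmn using Nat.le_induction with
  | base => exact hm
  | succ n _ ih => exact not_not.mp fun h => π.initial n h ih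

def take (π : Deriv O L) (n : ℕ) : Deriv O L where
  step i := if i < n then π.step i else none
  initial i h := by
    have hi : i + 1 < n := by by_contra hi; simp [hi] at h
    simpa [show i < n by omega] using π.initial i (by simpa [hi] using h)
  comp i s t hs ht := by
    have hi : i + 1 < n := by by_contra hi; simp [hi] at ht
    simp only [show i < n by omega, hi, if_true] at hs ht
    exact π.comp i s t hs ht

lemma take_finite (π : Deriv O L) (n : ℕ) : (π.take n).Finite :=
  ⟨n, by simp [take]⟩

lemma take_NE {π : Deriv O L} (hπ : π.NE) {n : ℕ} (hn : 0 < n) : (π.take n).NE := by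
  simpa [NE, take, hn] using hπ

lemma take_prefix (π : Deriv O L) (n : ℕ) : DPrefix (π.take n) π := by
  intro i s hs
  by_cases hi : i < n <;> simp_all [take]

end Deriv

variable {O L : Type}

lemma histD_congr {π π' : Deriv O L} {j : ℕ} (h : ∀ i < j, π.step i = π'.step i) :
    histD π j = histD π' j :=
  List.filterMap_congr fun i hi => by rw [h i (List.mem_range.mp hi)]

theorem closedStrat_extOf (lam : List (O × L) → O → Set (O × L × O)) :
    ClosedStrat (ExtOf lam) := by
  rintro π ⟨hne, hlim⟩
  refine ⟨hne, fun j s hs => ?_⟩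
  obtain ⟨π', hπ', hpre⟩ := hlim (π.take (j + 1)) (π.take_finite _)
    (Deriv.take_NE hne j.succ_pos) (π.take_prefix _)
  have hstep : π'.step j = some s := hpre j s (by simp [Deriv.take, hs])
  have hhist : histD π' j = histD π j := by
    refine histD_congr fun i hi => ?_
    have hi_ne : π.step i ≠ none := fun hnone => by
      simp [π.step_eq_none_of_le hnone hi.le] at hs
    obtain ⟨t, ht⟩ := Option.ne_none_iff_exists'.mp hi_ne
    rw [ht]
    exact hpre i t (by simp [Deriv.take, hi.le, ht])
  simpa [hhist] using hπ'.2 j s hstep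

/-- The infinite derivation (a →φ₁ a)^ω. -/
def loop : Deriv Obj Lab where
  step _ := some (Obj.a, Lab.f1, Obj.a)
  initial _ := by simp
  comp _ _ _ hs ht := by cases hs; cases ht; rfl

/-- The derivation (a →φ₁ a)ⁿ (a →φ₂ b). -/
def loopThenFire (n : ℕ) : Deriv Obj Lab where
  step i := if i < n then some (Obj.a, Lab.f1, Obj.a)
    else if i = n then some (Obj.a, Lab.f2, Obj.b) else none
  initial i h := by
    have hi : i < n := by
      by_contra hi
      simp [show ¬i + 1 < n by omega, show i + 1 ≠ n by omega] at h
    simp [hi]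
  comp i s t hs ht := by
    split_ifs at hs ht <;> first | omega | (cases hs; cases ht; rfl)

lemma loopThenFire_mem_zeta (n : ℕ) : loopThenFire n ∈ zeta :=
  ⟨n, fun i hi => by simp [loopThenFire, hi], by simp [loopThenFire],
    fun i hi => by simp [loopThenFire, show ¬i < n by omega, show i ≠ n by omega]⟩

lemma loop_not_mem_zeta : loop ∉ zeta := by
  rintro ⟨n, -, hn, -⟩
  simp [loop] at hn

lemma limPt_zeta_loop : LimPt zeta loop := by
  refine ⟨by simp [Deriv.NE, loop], fun π₀ ⟨n, hn⟩ _ hpre => ?_⟩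
  refine ⟨loopThenFire n, loopThenFire_mem_zeta n, fun i s hs => ?_⟩
  have hi : i < n := by
    by_contra hi
    simp [π₀.step_eq_none_of_le hn (not_lt.mp hi)] at hs
  have hs' : some (Obj.a, Lab.f1, Obj.a) = some s := hpre i s hs
  simp [loopThenFire, hi, hs']

lemma zeta_not_closedStrat : ¬ ClosedStrat zeta :=
  fun h => loop_not_mem_zeta (h loop limPt_zeta_loop)

/-- `zeta` is not the extension of any intensional strategy with
memory. -/
theorem eventually_fire_not_extension :
    ¬ ∃ lam, WfStrat Gam lam ∧ ExtOf lam = zeta := by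
  rintro ⟨lam, -, hext⟩
  exact zeta_not_closedStrat (hext ▸ closedStrat_extOf lam)
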